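/- Fix ε ∈ (0, 1]. If f is a deterministic strategyproof unanimous (2−ε)-consistent mechanism with prediction on the real line, then whenever min_i x_i < π < max_i x_i, f(x, π) = π. -/
import Mathlib


open Finset

noncomputable def loF {n : ℕ} (x : Fin (n+1) → ℝ) : ℝ := univ.inf' univ_nonempty x
noncomputable def hiF {n : ℕ} (x : Fin (n+1) → ℝ) : ℝ := univ.sup' univ_nonempty x
noncomputable def midF {n : ℕ} (x : Fin (n+1) → ℝ) : ℝ := (loF x + hiF x) / 2
noncomputable def rF {n : ℕ} (x : Fin (n+1) → ℝ) : ℝ := (hiF x - loF x) / 2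
noncomputable def MC {n : ℕ} (x : Fin (n+1) → ℝ) (y : ℝ) : ℝ :=
  univ.sup' univ_nonempty (fun i => |x i - y|)
noncomputable def minMaxP {n : ℕ} (x : Fin (n+1) → ℝ) (π : ℝ) : ℝ :=
  max (loF x) (min (hiF x) π)

section Aux
variable {n : ℕ} {f : (Fin (n+1) → ℝ) → ℝ → ℝ}

lemma pullAux
    (hSP : ∀ (x : Fin (n+1) → ℝ) (π : ℝ) (i : Fin (n+1)) (xi' : ℝ),
      |x i - f x π| ≤ |x i - f (Function.update x i xi') π|)
    (x : Fin (n+1) → ℝ) (π : ℝ) (i : Fin (n+1)) :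
    f (Function.update x i (f x π)) π = f x π := by
  have h := hSP (Function.update x i (f x π)) π i (x i)
  rw [Function.update_idem, Function.update_eq_self, Function.update_self] at h
  have h2 : |f x π - f (Function.update x i (f x π)) π| ≤ 0 := by simpa using h
  have h4 := abs_nonpos_iff.mp h2
  linarith [h4]

lemma moveAll
    (hSP : ∀ (x : Fin (n+1) → ℝ) (π : ℝ) (i : Fin (n+1)) (xi' : ℝ),
      |x i - f x π| ≤ |x i - f (Function.update x i xi') π|)
    (x : Fin (n+1) → ℝ) (π : ℝ) (j : Fin (n+1)) :
    f (fun i => if i = j then x j else f x π) π = f x π := by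
  have key : ∀ s : Finset (Fin (n+1)), j ∉ s →
      f (fun i => if i ∈ s then f x π else x i) π = f x π := by
    intro s
    induction s using Finset.induction_on with
    | empty => intro _; simp
    | @insert a s ha ih =>
      intro hj
      have hjs : j ∉ s := fun h => hj (Finset.mem_insert_of_mem h)
      have haj : a ≠ j := fun h => hj (h ▸ Finset.mem_insert_self a s)
      have hIH := ih hjs
      have heq : (fun i => if i ∈ insert a s then f x π else x i)
          = Function.update (fun i => if i ∈ s then f x π else x i) a
              (f (fun i => if i ∈ s then f x π else x i) π) := by
        funext i
        by_cases hia : i = a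
        · subst hia; simp [hIH]
        · simp [Function.update_of_ne hia, Finset.mem_insert, hia]
      rw [heq, pullAux hSP, hIH]
  have h := key (univ.erase j) (Finset.notMem_erase j univ)
  have heq : (fun i => if i ∈ univ.erase j then f x π else x i)
      = (fun i => if i = j then x j else f x π) := by
    funext i
    by_cases hi : i = j
    · subst hi; simp
    · simp [Finset.mem_erase, hi]
  rw [heq] at h
  exact h

lemma no_lt (ε : ℝ) (hε0 : 0 < ε) (hε1 : ε ≤ 1)
    (hSP : ∀ (x : Fin (n+1) → ℝ) (π : ℝ) (i : Fin (n+1)) (xi' : ℝ),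
      |x i - f x π| ≤ |x i - f (Function.update x i xi') π|)
    (hCons : ∀ x : Fin (n+1) → ℝ, MC x (f x (midF x)) ≤ (2 - ε) * rF x)
    (x : Fin (n+1) → ℝ) (π : ℝ) (hlo : loF x < π) (hhi : π < hiF x) :
    ¬ (f x π < π) := by
  intro hy
  set y := f x π with hydef
  obtain ⟨j, -, hj⟩ := Finset.exists_mem_eq_sup' (univ_nonempty) x
  obtain ⟨i0, -, hi0⟩ := Finset.exists_mem_eq_inf' (univ_nonempty) x
  have hxj : x j = hiF x := hj.symm
  have hxi0 : x i0 = loF x := hi0.symm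
  have hij : i0 ≠ j := by
    intro h; rw [h, hxj] at hxi0; linarith [hlo, hhi, hxi0]
  set z : Fin (n+1) → ℝ := fun i => if i = j then x j else y with hzdef
  have hzf : f z π = y := moveAll hSP x π j
  set b' : ℝ := 2*π - y with hb'def
  have hb'y : y < b' := by linarith
  set z' : Fin (n+1) → ℝ := Function.update z j b' with hz'def
  have hz'j : z' j = b' := Function.update_self j b' z
  have hz'ne : ∀ i, i ≠ j → z' i = y := by
    intro i hi
    rw [hz'def, Function.update_of_ne hi, hzdef]
    simp [hi]
  have hz'i0 : z' i0 = y := hz'ne i0 hij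
  have hhi' : hiF z' = b' := by
    apply le_antisymm
    · apply Finset.sup'_le
      intro i _
      by_cases hi : i = j
      · rw [hi, hz'j]
      · rw [hz'ne i hi]; linarith
    · exact hz'j ▸ Finset.le_sup' z' (mem_univ j)
  have hlo' : loF z' = y := by
    apply le_antisymm
    · exact hz'i0 ▸ Finset.inf'_le z' (mem_univ i0)
    · apply Finset.le_inf'
      intro i _
      by_cases hi : i = j
      · rw [hi, hz'j]; linarith
      · rw [hz'ne i hi]
  have hmid : midF z' = π := by
    rw [midF, hlo', hhi', hb'def]; ring
  have hr : rF z' = π - y := by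
    rw [rF, hlo', hhi', hb'def]; ring
  set w := f z' π with hwdef
  have hconsz : MC z' w ≤ (2-ε) * (π - y) := by
    have h := hCons z'
    rw [hmid, hr] at h
    exact h
  have h1 : |b' - w| ≤ (2-ε)*(π-y) := by
    refine le_trans ?_ hconsz
    have := Finset.le_sup' (fun i => |z' i - w|) (mem_univ j)
    rw [hz'j] at this
    exact this
  have h2 : |y - w| ≤ (2-ε)*(π-y) := by
    refine le_trans ?_ hconsz
    have := Finset.le_sup' (fun i => |z' i - w|) (mem_univ i0)
    rw [hz'i0] at this
    exact this
  -- extract bounds on w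
  have hεp : 0 < ε * (π - y) := mul_pos hε0 (by linarith)
  have hK : (2-ε)*(π-y) = 2*(π-y) - ε*(π-y) := by ring
  obtain ⟨h1a, h1b⟩ := abs_le.mp h1
  obtain ⟨h2a, h2b⟩ := abs_le.mp h2
  have hwy : y < w := by linarith
  have hw2 : w < 2*π - y := by linarith
  -- SP violation for agent j at z
  have hsp := hSP z π j b'
  have hupd : Function.update z j b' = z' := hz'def.symm
  rw [hupd, hzf] at hsp
  have hzj : z j = x j := by rw [hzdef]; simp
  rw [hzj, ← hwdef] at hsp
  have hbπ : π < x j := hxj ▸ hhi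
  have habs : |x j - y| = x j - y := abs_of_pos (by linarith)
  rw [habs] at hsp
  rcases abs_cases (x j - w) with ⟨heq, -⟩ | ⟨heq, -⟩ <;> rw [heq] at hsp <;> linarith

end Aux

section Neg
variable {n : ℕ}

lemma hiF_neg (x : Fin (n+1) → ℝ) : hiF (fun i => -x i) = -loF x := by
  apply le_antisymm
  · apply Finset.sup'_le
    intro i _
    have : loF x ≤ x i := Finset.inf'_le x (mem_univ i)
    linarith
  · obtain ⟨i0, -, hi0⟩ := Finset.exists_mem_eq_inf' (univ_nonempty (α := Fin (n+1))) x
    have h := Finset.le_sup' (fun i => -x i) (mem_univ i0)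
    rw [loF, hi0]
    exact h

lemma loF_neg (x : Fin (n+1) → ℝ) : loF (fun i => -x i) = -hiF x := by
  apply le_antisymm
  · obtain ⟨j, -, hj⟩ := Finset.exists_mem_eq_sup' (univ_nonempty (α := Fin (n+1))) x
    have h := Finset.inf'_le (fun i => -x i) (mem_univ j)
    rw [hiF, hj]
    exact h
  · apply Finset.le_inf'
    intro i _
    have : x i ≤ hiF x := Finset.le_sup' x (mem_univ i)
    linarith

lemma MC_neg (x : Fin (n+1) → ℝ) (w : ℝ) : MC (fun i => -x i) (-w) = MC x w := by
  unfold MC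
  have : (fun i => |(fun k => -x k) i - (-w)|) = fun i => |x i - w| := by
    funext i
    rw [show (fun k => -x k) i - (-w) = -(x i - w) by ring, abs_neg]
  rw [this]

end Neg

section Aux2
variable {n : ℕ} {f : (Fin (n+1) → ℝ) → ℝ → ℝ}

lemma no_gt (ε : ℝ) (hε0 : 0 < ε) (hε1 : ε ≤ 1)
    (hSP : ∀ (x : Fin (n+1) → ℝ) (π : ℝ) (i : Fin (n+1)) (xi' : ℝ),
      |x i - f x π| ≤ |x i - f (Function.update x i xi') π|)
    (hCons : ∀ x : Fin (n+1) → ℝ, MC x (f x (midF x)) ≤ (2 - ε) * rF x)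
    (x : Fin (n+1) → ℝ) (π : ℝ) (hlo : loF x < π) (hhi : π < hiF x) :
    ¬ (π < f x π) := by
  have hSPF : ∀ (z : Fin (n+1) → ℝ) (ρ : ℝ) (i : Fin (n+1)) (zi' : ℝ),
      |z i - (fun z ρ => -f (fun k => -z k) (-ρ)) z ρ| ≤
        |z i - (fun z ρ => -f (fun k => -z k) (-ρ)) (Function.update z i zi') ρ| := by
    intro z ρ i zi'
    have hupd : (fun k => -(Function.update z i zi' k))
        = Function.update (fun k => -z k) i (-zi') := by
      funext k
      by_cases hk : k = i
      · subst hk; simp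
      · simp [Function.update_of_ne hk]
    have h := hSP (fun k => -z k) (-ρ) i (-zi')
    rw [← hupd] at h
    have e1 : |z i - (fun z ρ => -f (fun k => -z k) (-ρ)) z ρ|
        = |(fun k => -z k) i - f (fun k => -z k) (-ρ)| := by
      rw [show z i - (fun z ρ => -f (fun k => -z k) (-ρ)) z ρ
          = -((fun k => -z k) i - f (fun k => -z k) (-ρ)) by simp; ring, abs_neg]
    have e2 : |z i - (fun z ρ => -f (fun k => -z k) (-ρ)) (Function.update z i zi') ρ|
        = |(fun k => -z k) i - f (fun k => -(Function.update z i zi' k)) (-ρ)| := by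
      rw [show z i - (fun z ρ => -f (fun k => -z k) (-ρ)) (Function.update z i zi') ρ
          = -((fun k => -z k) i - f (fun k => -(Function.update z i zi' k)) (-ρ)) by simp; ring,
        abs_neg]
    rw [e1, e2]
    exact h
  have hConsF : ∀ z : Fin (n+1) → ℝ,
      MC z ((fun z ρ => -f (fun k => -z k) (-ρ)) z (midF z)) ≤ (2 - ε) * rF z := by
    intro z
    have hm : midF (fun k => -z k) = -(midF z) := by
      rw [midF, loF_neg, hiF_neg, midF]; ring
    have hr : rF (fun k => -z k) = rF z := by
      rw [rF, loF_neg, hiF_neg, rF]; ring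
    have h := hCons (fun k => -z k)
    rw [hm, hr] at h
    have e : f (fun k => -z k) (-(midF z))
        = -((fun z ρ => -f (fun k => -z k) (-ρ)) z (midF z)) := by simp
    rw [e, MC_neg] at h
    exact h
  have hloF : loF (fun i => -x i) < -π := by rw [loF_neg]; linarith
  have hhiF : -π < hiF (fun i => -x i) := by rw [hiF_neg]; linarith
  have h2 := no_lt ε hε0 hε1 hSPF hConsF (fun i => -x i) (-π) hloF hhiF
  simp only [neg_neg] at h2
  intro hy
  exact h2 (by linarith)

end Aux2

/-- Any deterministic SP unanimous (2−ε)-consistent mechanism with prediction must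
output the prediction whenever it lies strictly between the extreme agent locations. -/
theorem stmt6 {n : ℕ} (ε : ℝ) (hε0 : 0 < ε) (hε1 : ε ≤ 1)
    (f : (Fin (n+1) → ℝ) → ℝ → ℝ)
    (hSP : ∀ (x : Fin (n+1) → ℝ) (π : ℝ) (i : Fin (n+1)) (xi' : ℝ),
      |x i - f x π| ≤ |x i - f (Function.update x i xi') π|)
    (hU : ∀ (c π : ℝ), f (fun _ => c) π = c)
    (hCons : ∀ x : Fin (n+1) → ℝ, MC x (f x (midF x)) ≤ (2 - ε) * rF x) :
    ∀ (x : Fin (n+1) → ℝ) (π : ℝ), loF x < π → π < hiF x → f x π = π := by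
  intro x π hlo hhi
  have h1 := no_lt ε hε0 hε1 hSP hCons x π hlo hhi
  have h2 := no_gt ε hε0 hε1 hSP hCons x π hlo hhi
  linarith [not_lt.mp h1, not_lt.mp h2]
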